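/- Let λ be a topological CL-labeling of a finite bounded poset P. Then any total order F_1, …, F_k on the maximal chains of P (regarded as the facets of the order complex Δ(P)) that linearly extends the lexicographic order on their label sequences (i.e., if λ(m) is lexicographically strictly smaller than λ(m'), then m comes before m') is a shelling order for the facets of Δ(P). -/

import Mathlib

/-- `l` is a saturated chain from `x` to `y` in the poset `α`:
a list `x = x₀ ⋖ x₁ ⋖ ⋯ ⋖ x_k = y` of elements, each covered by the next. -/
def SatChain {α : Type*} [PartialOrder α] (x y : α) (l : List α) : Prop :=
  l.Chain' (· ⋖ ·) ∧ l.head? = some x ∧ l.getLast? = some y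

/-- The label sequence of a saturated chain, read from bottom to top.  Here
`lab r x y` is the label of the cover relation `x ⋖ y` with respect to the root `r`
(a saturated chain from `⊥` to `x` recorded as a list ending in `x`); this encodes a
chain-edge (CE-) labeling.  The first list argument is the root of the head of the
chain, the second is the chain itself. -/
def labelSeq {α Q : Type*} (lab : List α → α → α → Q) : List α → List α → List Q
  | _, [] => []
  | _, [_] => []
  | r, x :: y :: c => lab r x y :: labelSeq lab (r ++ [y]) (y :: c)

/-- `u ⋖ v ⋖ w` is a topological ascent with respect to the root `r`: the label
sequence of `u ⋖ v ⋖ w` is lexicographically strictly smaller than that of every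
other saturated chain from `u` to `w`. -/
def TopAscent {α Q : Type*} [PartialOrder α] [LinearOrder Q]
    (lab : List α → α → α → Q) (r : List α) (u v w : α) : Prop :=
  u ⋖ v ∧ v ⋖ w ∧ ∀ c, SatChain u w c → c ≠ [u, v, w] →
    List.Lex (· < ·) (labelSeq lab r [u, v, w]) (labelSeq lab r c)

/-- The saturated chain (second argument) is topologically ascending with respect to
the root given as first argument: every consecutive triple on it is a topological
ascent (with respect to the appropriately extended root). -/
def TopAscending {α Q : Type*} [PartialOrder α] [LinearOrder Q]
    (lab : List α → α → α → Q) : List α → List α → Prop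
  | r, u :: v :: w :: c => TopAscent lab r u v w ∧ TopAscending lab (r ++ [v]) (v :: w :: c)
  | _, _ => True

/-- `lab` is a CC-labeling: every rooted interval `[u,v]_r` has exactly one
topologically ascending saturated chain, distinct saturated chains of `[u,v]_r` have
distinct label sequences, and no label sequence is a prefix of another. -/
def IsCCLabeling {α Q : Type*} [PartialOrder α] [OrderBot α] [LinearOrder Q]
    (lab : List α → α → α → Q) : Prop :=
  ∀ u v r, SatChain (⊥ : α) u r → u ≤ v →
    (∃! c, SatChain u v c ∧ TopAscending lab r c) ∧
    (∀ c c', SatChain u v c → SatChain u v c' → c ≠ c' →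
      labelSeq lab r c ≠ labelSeq lab r c' ∧
      ¬ labelSeq lab r c <+: labelSeq lab r c')

/-- `lab` is a CL-labeling: every rooted interval `[u,v]_r` has exactly one saturated
chain with strictly increasing label sequence, and this label sequence is
lexicographically strictly smaller than that of every other saturated chain. -/
def IsCLLabeling {α Q : Type*} [PartialOrder α] [OrderBot α] [LinearOrder Q]
    (lab : List α → α → α → Q) : Prop :=
  ∀ u v r, SatChain (⊥ : α) u r → u ≤ v →
    ∃ c, SatChain u v c ∧ List.Chain' (· < ·) (labelSeq lab r c) ∧
      (∀ c', SatChain u v c' → List.Chain' (· < ·) (labelSeq lab r c') → c' = c) ∧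
      (∀ c', SatChain u v c' → c' ≠ c →
        List.Lex (· < ·) (labelSeq lab r c) (labelSeq lab r c'))

/-- `lab` is a topological CL-labeling: every rooted interval `[u,v]_r` has a unique
saturated chain with lexicographically smallest label sequence, and every other
saturated chain of `[u,v]_r` contains at least one topological descent (i.e. is not
topologically ascending). -/
def IsTopolCLLabeling {α Q : Type*} [PartialOrder α] [OrderBot α] [LinearOrder Q]
    (lab : List α → α → α → Q) : Prop :=
  ∀ u v r, SatChain (⊥ : α) u r → u ≤ v →
    ∃ c, SatChain u v c ∧
      (∀ c', SatChain u v c' → c' ≠ c →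
        List.Lex (· < ·) (labelSeq lab r c) (labelSeq lab r c')) ∧
      (∀ c', SatChain u v c' → c' ≠ c → ¬ TopAscending lab r c')

/-- `lab` has the unique earliest (UE) property: in each rooted interval `[u,v]_r`,
the smallest label on the cover relations upward from `u` occurs on only one such
cover relation. -/
def HasUE {α Q : Type*} [PartialOrder α] [OrderBot α] [LinearOrder Q]
    (lab : List α → α → α → Q) : Prop :=
  ∀ u v r, SatChain (⊥ : α) u r → u ≤ v →
    ∀ a b, u ⋖ a → a ≤ v → u ⋖ b → b ≤ v →
      (∀ a', u ⋖ a' → a' ≤ v → lab r u a ≤ lab r u a') →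
      (∀ a', u ⋖ a' → a' ≤ v → lab r u b ≤ lab r u a') → a = b

/-- `lab` is self-consistent: whenever `c₀` is the lexicographically strictly first
saturated chain of a rooted interval `[u,v]_r`, with `a` the atom on `c₀` and
`b ≠ a` another atom of `[u,v]_r`, then for every `v'` above both `a` and `b`, every
saturated chain of `[u,v']_r` through `b` is lexicographically later than every
saturated chain of `[u,v']_r` through `a`. -/
def SelfConsistent {α Q : Type*} [PartialOrder α] [OrderBot α] [LinearOrder Q]
    (lab : List α → α → α → Q) : Prop :=
  ∀ u v r, SatChain (⊥ : α) u r → ∀ c₀, SatChain u v c₀ →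
    (∀ c, SatChain u v c → c ≠ c₀ →
      List.Lex (· < ·) (labelSeq lab r c₀) (labelSeq lab r c)) →
    ∀ a, u ⋖ a → a ∈ c₀ →
    ∀ b, u ⋖ b → b ≤ v → b ≠ a →
    ∀ v', a ≤ v' → b ≤ v' →
    ∀ ca cb, SatChain u v' ca → a ∈ ca → SatChain u v' cb → b ∈ cb →
      List.Lex (· < ·) (labelSeq lab r ca) (labelSeq lab r cb)

/-!
Let `m` come before `m'`. Follow `m'` from the last element `u` it shares with `m` before the two
chains part, up to the first element `w` at which it meets `m` again. If this segment of `m'` were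
the lexicographically first chain of the rooted interval `[u, w]`, then `m'` would come before `m`;
this needs that the first chain of an interval beats every other one at a genuine fork of the label
sequences and never as a proper prefix (the poset need not be graded). So the segment has a
topological descent `x ⋖ v ⋖ z`. Replacing `x ⋖ v ⋖ z` by the first chain of `[x, z]` gives a
maximal chain lexicographically before `m'` that contains all of `m'` except `v`, and `v` is not
on `m`.
-/
namespace List

variable {α Q : Type*}

theorem exists_fork_of_not_prefix :
    ∀ {l l' : List α}, ¬ l <+: l' → ¬ l' <+: l →
      ∃ A a b t t', l = A ++ a :: t ∧ l' = A ++ b :: t' ∧ a ≠ b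
  | [], _, h, _ => absurd nil_prefix h
  | _ :: _, [], _, h' => absurd nil_prefix h'
  | a :: t, b :: t', h, h' => by
    by_cases hab : a = b
    · subst hab
      obtain ⟨A, c, d, s, s', rfl, rfl, hcd⟩ :=
        exists_fork_of_not_prefix (mt (prefix_cons_inj a).2 h) (mt (prefix_cons_inj a).2 h')
      exact ⟨a :: A, c, d, s, s', rfl, rfl, hcd⟩
    · exact ⟨[], a, b, t, t', rfl, rfl, hab⟩

section MissesOnly

variable {l l' : List α} {v : α}

def MissesOnly (l' l : List α) (v : α) : Prop :=
  v ∈ l ∧ v ∉ l' ∧ ∀ y ∈ l, y ≠ v → y ∈ l'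

theorem MissesOnly.splice (h : MissesOnly l' l v) (P S : List α) (hnd : (P ++ l ++ S).Nodup) :
    MissesOnly (P ++ l' ++ S) (P ++ l ++ S) v := by
  obtain ⟨hv, hv', hsub⟩ := h
  have hvP : v ∉ P := fun hvP ↦ (nodup_append.1 (nodup_append.1 hnd).1).2.2 v hvP v hv rfl
  have hvS : v ∉ S := fun hvS ↦ (nodup_append.1 hnd).2.2 v (mem_append_right P hv) v hvS rfl
  refine ⟨by simp [hv], by simp [hvP, hv', hvS], fun y hy hyv ↦ ?_⟩
  simp only [mem_append] at hy ⊢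
  rcases hy with (hy | hy) | hy
  exacts [.inl (.inl hy), .inl (.inr (hsub y hy hyv)), .inr hy]

theorem MissesOnly.toFinset_inter [DecidableEq α] (h : MissesOnly l' l v) :
    l'.toFinset ∩ l.toFinset = l.toFinset.erase v := by
  ext y
  simp only [Finset.mem_inter, Finset.mem_erase, mem_toFinset]
  exact ⟨fun ⟨hy', hy⟩ ↦ ⟨fun hyv ↦ h.2.1 (hyv ▸ hy'), hy⟩, fun ⟨hyv, hy⟩ ↦ ⟨h.2.2 y hy hyv, hy⟩⟩

end MissesOnly

variable [LinearOrder Q]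

/-- Strict lexicographic order decided at a position where both lists have an entry, rather than
by `s` being a proper prefix of `t`. -/
def ForkLt (s t : List Q) : Prop :=
  ∃ p a b s' t', s = p ++ a :: s' ∧ t = p ++ b :: t' ∧ a < b

namespace ForkLt

variable {s t s' t' : List Q}

theorem lt (h : ForkLt s t) : s < t := by
  obtain ⟨p, a, b, s', t', rfl, rfl, hab⟩ := h
  exact Lex.append_left _ (Lex.rel hab) p

theorem append_left (h : ForkLt s t) (p : List Q) : ForkLt (p ++ s) (p ++ t) := by
  obtain ⟨q, a, b, s', t', rfl, rfl, hab⟩ := h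
  exact ⟨p ++ q, a, b, s', t', by simp, by simp, hab⟩

theorem of_prefix (h : ForkLt s t) (hs : s <+: s') (ht : t <+: t') : ForkLt s' t' := by
  obtain ⟨p, a, b, s₁, t₁, rfl, rfl, hab⟩ := h
  obtain ⟨e, rfl⟩ := hs
  obtain ⟨f, rfl⟩ := ht
  exact ⟨p, a, b, s₁ ++ e, t₁ ++ f, by simp, by simp, hab⟩

theorem not_prefix (h : ForkLt s t) : ¬ s <+: t := by
  obtain ⟨p, a, b, s', t', rfl, rfl, hab⟩ := h
  rintro ⟨e, he⟩
  simp only [append_assoc, append_cancel_left_eq, cons_append, cons.injEq] at he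
  exact hab.ne he.1

theorem prefix_or_forkLt (h : ForkLt s t) {u : List Q} (hu : u <+: t) :
    u <+: s ∨ ForkLt s u := by
  obtain ⟨p, a, b, s', t', rfl, rfl, hab⟩ := h
  rcases le_or_gt u.length p.length with hle | hlt
  · exact .inl ((prefix_of_prefix_length_le hu (prefix_append _ _) hle).trans
      (prefix_append _ _))
  · obtain ⟨e, rfl⟩ := prefix_of_prefix_length_le (prefix_append _ _) hu hlt.le
    rw [prefix_append_right_inj] at hu
    cases e with
    | nil => simp at hlt
    | cons x c =>
      obtain rfl := (cons_prefix_cons.1 hu).1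
      exact .inr ⟨p, a, x, s', c, rfl, rfl, hab⟩

end ForkLt

theorem forkLt_or_prefix_of_lt {s t : List Q} (h : s < t) : ForkLt s t ∨ s <+: t := by
  induction h with
  | nil => exact .inr nil_prefix
  | @cons a s t _ ih =>
    rcases ih with hf | hp
    · exact .inl (hf.append_left [a])
    · exact .inr ((prefix_cons_inj a).2 hp)
  | @rel a s b t hab => exact .inl ⟨[], a, b, s, t, rfl, rfl, hab⟩

end List

section LabelSeq

variable {α Q : Type*} (lab : List α → α → α → Q)

theorem labelSeq_append_cons :
    ∀ (X r : List α) (x : α) (Y : List α),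
      labelSeq lab r (X ++ x :: Y) =
        labelSeq lab r (X ++ [x]) ++ labelSeq lab (r ++ (X ++ [x]).tail) (x :: Y)
  | [], r, x, Y => by simp [labelSeq]
  | [a], r, x, Y => by simp [labelSeq]
  | a :: b :: X, r, x, Y => by
    have ih := labelSeq_append_cons (b :: X) (r ++ [b]) x Y
    simp only [List.cons_append] at ih
    simp [labelSeq, ih]

theorem labelSeq_prefix_append {r l : List α} (hl : l ≠ []) (S : List α) :
    labelSeq lab r l <+: labelSeq lab r (l ++ S) := by
  obtain ⟨X, x, rfl⟩ := (List.eq_nil_or_concat' l).resolve_left hl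
  rw [List.append_assoc, List.singleton_append, labelSeq_append_cons lab X r x S]
  exact List.prefix_append _ _

theorem length_labelSeq : ∀ (r l : List α), (labelSeq lab r l).length = l.length - 1
  | _, [] => rfl
  | _, [_] => rfl
  | r, _ :: y :: l => by simp [labelSeq, length_labelSeq (r ++ [y]) (y :: l)]

theorem labelSeq_forkLt_splice [LinearOrder Q] {r P c c' : List α} {u : α}
    (hc : c.head? = some u) (hc' : c'.head? = some u) (S S' : List α)
    (h : List.ForkLt (labelSeq lab (r ++ (P ++ [u]).tail) c')
      (labelSeq lab (r ++ (P ++ [u]).tail) c)) :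
    List.ForkLt (labelSeq lab r (P ++ c' ++ S')) (labelSeq lab r (P ++ c ++ S)) := by
  obtain ⟨M, rfl⟩ := List.head?_eq_some_iff.1 hc
  obtain ⟨M', rfl⟩ := List.head?_eq_some_iff.1 hc'
  simp only [List.append_assoc, List.cons_append]
  rw [labelSeq_append_cons lab P r u (M' ++ S'), labelSeq_append_cons lab P r u (M ++ S)]
  refine (h.of_prefix ?_ ?_).append_left _ <;>
    exact labelSeq_prefix_append lab (List.cons_ne_nil _ _) _

end LabelSeq

namespace SatChain

variable {α : Type*} [PartialOrder α] {a b u v w x y z : α} {l l' P S c c' : List α}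

theorem pairwise (h : SatChain x y l) : l.Pairwise (· < ·) :=
  List.isChain_iff_pairwise.1 (h.1.imp fun _ _ h ↦ h.lt)

theorem nodup (h : SatChain x y l) : l.Nodup :=
  h.pairwise.imp ne_of_lt

theorem head_mem (h : SatChain x y l) : x ∈ l :=
  List.mem_of_head? h.2.1

theorem last_mem (h : SatChain x y l) : y ∈ l :=
  List.mem_of_getLast? h.2.2

theorem head_le_of_mem (h : SatChain x y l) (ha : a ∈ l) : x ≤ a := by
  have hp := h.pairwise
  obtain ⟨t, rfl⟩ := List.head?_eq_some_iff.1 h.2.1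
  rcases List.mem_cons.1 ha with rfl | ha
  · exact le_rfl
  · exact ((List.pairwise_cons.1 hp).1 a ha).le

theorem le_last_of_mem (h : SatChain x y l) (ha : a ∈ l) : a ≤ y := by
  have hp := h.pairwise
  obtain ⟨t, rfl⟩ := List.getLast?_eq_some_iff.1 h.2.2
  rcases List.mem_append.1 ha with ha | ha
  · exact ((List.pairwise_append.1 hp).2.2 a ha y (List.mem_singleton_self y)).le
  · exact (List.mem_singleton.1 ha).le

theorem singleton (x : α) : SatChain x x [x] :=
  ⟨List.isChain_singleton x, rfl, rfl⟩

theorem le (h : SatChain x y l) : x ≤ y :=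
  h.head_le_of_mem h.last_mem

theorem triple (hxv : x ⋖ v) (hvz : v ⋖ z) : SatChain x z [x, v, z] :=
  ⟨List.isChain_cons_cons.2 ⟨hxv, List.isChain_pair.2 hvz⟩, rfl, rfl⟩

theorem initial (h : SatChain a b (P ++ x :: S)) : SatChain a x (P ++ [x]) := by
  refine ⟨h.1.prefix ⟨S, by simp⟩, ?_, by simp⟩
  cases P <;> simpa using h.2.1

theorem segment (h : SatChain a b (P ++ (u :: c ++ [w]) ++ S)) : SatChain u w (u :: c ++ [w]) :=
  ⟨h.1.infix ⟨P, S, rfl⟩, rfl, by rw [List.getLast?_append]; rfl⟩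

theorem append_tail (hl : SatChain a u l) (hc : SatChain u b c) : SatChain a b (l ++ c.tail) := by
  obtain ⟨t, rfl⟩ := List.head?_eq_some_iff.1 hc.2.1
  obtain ⟨s, rfl⟩ := List.getLast?_eq_some_iff.1 hl.2.2
  have hsu := List.isChain_append.1 hl.1
  simp only [List.tail_cons, List.append_assoc, List.singleton_append]
  refine ⟨List.isChain_append.2 ⟨hsu.1, hc.1, by simpa using hsu.2.2⟩, ?_, ?_⟩
  · simpa using hl.2.1
  · rw [List.getLast?_append, hc.2.2]
    rfl

theorem splice (h : SatChain a b (P ++ c ++ S)) (hc : SatChain u w c) (hc' : SatChain u w c') :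
    SatChain a b (P ++ c' ++ S) := by
  have hh : c'.head? = c.head? := hc'.2.1.trans hc.2.1.symm
  have hl : c'.getLast? = c.getLast? := hc'.2.2.trans hc.2.2.symm
  obtain ⟨hch, hhd, hlt⟩ := h
  refine ⟨?_, ?_, ?_⟩
  · change List.IsChain _ _ at hch ⊢
    simp only [List.isChain_append, List.getLast?_append, hh, hl] at hch ⊢
    exact ⟨⟨hch.1.1, hc'.1, hch.1.2.2⟩, hch.2⟩
  · simpa only [List.head?_append, hh] using hhd
  · simpa only [List.getLast?_append, hl] using hlt

theorem eq_of_prefix (h : SatChain x y l) (h' : SatChain x y l') (hp : l <+: l') : l = l' := by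
  obtain ⟨k, rfl⟩ := hp
  rcases List.eq_nil_or_concat' k with rfl | ⟨k, z, rfl⟩
  · simp
  · obtain rfl : z = y := by simpa [← List.append_assoc] using h'.2.2
    have hp := (List.pairwise_append.1 h'.pairwise).2.2 _ h.last_mem _
      (List.mem_append_right _ (List.mem_singleton_self _))
    exact absurd hp (lt_irrefl _)

theorem eq_singleton (h : SatChain x x l) : l = [x] := by
  obtain ⟨t, rfl⟩ := List.head?_eq_some_iff.1 h.2.1
  cases t with
  | nil => rfl
  | cons b t =>
    have hxb : x < b := (List.pairwise_cons.1 h.pairwise).1 b (by simp)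
    exact absurd (h.le_last_of_mem (by simp : b ∈ x :: b :: t)) hxb.not_ge

theorem eq_cons_of_covBy_of_mem (h : SatChain x y l) (hxv : x ⋖ v) (hv : v ∈ l) :
    ∃ t, l = x :: t ∧ SatChain v y t := by
  obtain ⟨t, rfl⟩ := List.head?_eq_some_iff.1 h.2.1
  cases t with
  | nil => exact absurd (List.mem_singleton.1 hv) hxv.lt.ne'
  | cons b t =>
    have hxb : x ⋖ b := h.1.rel
    have ht : SatChain b y (b :: t) := ⟨h.1.tail, rfl, by simpa using h.2.2⟩
    have hbv : b ≤ v := ht.head_le_of_mem (by simpa [hxv.lt.ne'] using hv)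
    obtain rfl : b = v := hbv.eq_of_not_lt fun hbv ↦ hxv.2 hxb.lt hbv
    exact ⟨_, rfl, ht⟩

theorem eq_triple (h : SatChain x z l) (hxv : x ⋖ v) (hvz : v ⋖ z) (hv : v ∈ l) :
    l = [x, v, z] := by
  obtain ⟨t, rfl, ht⟩ := h.eq_cons_of_covBy_of_mem hxv hv
  obtain ⟨t', rfl, ht'⟩ := ht.eq_cons_of_covBy_of_mem hvz ht.last_mem
  rw [ht'.eq_singleton]

theorem three_le_length (h : SatChain x z l) (hxv : x < v) (hvz : v < z) : 3 ≤ l.length := by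
  obtain ⟨hch, hh, hl⟩ := h
  match l, hch, hh, hl with
  | [_], _, hh, hl =>
    simp only [List.head?_cons, List.getLast?_singleton, Option.some.injEq] at hh hl
    exact absurd (hh ▸ hl ▸ hxv.trans hvz) (lt_irrefl _)
  | [_, _], hch, hh, hl =>
    simp only [List.head?_cons, List.getLast?_cons_cons, List.getLast?_singleton,
      Option.some.injEq] at hh hl
    subst hh hl
    exact absurd hvz (hch.rel.2 hxv)
  | _ :: _ :: _ :: _, _, _, _ => simp

theorem exists_detour (h : SatChain x y l) (h' : SatChain x y l') (hne : l ≠ l') :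
    ∃ P u C Z w S S', l = P ++ (u :: C ++ [w]) ++ S ∧ l' = P ++ (u :: Z ++ [w]) ++ S' ∧
      C ≠ Z ∧ ∀ a ∈ Z, a ∉ l := by
  classical
  obtain ⟨A, a, b, t, t', rfl, rfl, hab⟩ := List.exists_fork_of_not_prefix
    (fun hp ↦ hne (h.eq_of_prefix h' hp)) (fun hp ↦ hne (h'.eq_of_prefix h hp).symm)
  obtain ⟨P, u, rfl⟩ : ∃ P u, A = P ++ [u] := by
    refine (List.eq_nil_or_concat' A).resolve_left ?_
    rintro rfl
    exact hab (Option.some.inj (h.2.1.trans h'.2.1.symm))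
  have hy : y ∈ b :: t' := by
    have hl := h'.2.2
    rw [List.getLast?_append_of_ne_nil _ (List.cons_ne_nil b t')] at hl
    exact List.mem_of_getLast? hl
  obtain ⟨w, hw⟩ := Option.isSome_iff_exists.1
    ((List.find?_isSome (p := (· ∈ P ++ [u] ++ a :: t))).2 ⟨y, hy, decide_eq_true h.last_mem⟩)
  obtain ⟨hwl, Z, S', hZ, hZl⟩ := List.find?_eq_some_iff_append.1 hw
  simp only [decide_eq_true_eq, Bool.not_eq_true', decide_eq_false_iff_not] at hwl hZl
  have hwA : w ∉ P ++ [u] := fun hwA ↦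
    (List.nodup_append.1 h'.nodup).2.2 w hwA w (by simp [hZ]) rfl
  obtain ⟨C, S, hC⟩ := List.append_of_mem ((List.mem_append.1 hwl).resolve_left hwA)
  refine ⟨P, u, C, Z, w, S, S', by simp [hC], by simp [hZ], ?_, hZl⟩
  rintro rfl
  apply hab
  have ha := congrArg List.head? hC
  have hb := congrArg List.head? hZ
  cases C <;> simp_all

end SatChain

section TopAscending

variable {α Q : Type*} [PartialOrder α] [LinearOrder Q] {lab : List α → α → α → Q}

theorem exists_eq_append_of_not_topAscending :
    ∀ {r c : List α}, ¬ TopAscending lab r c →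
      ∃ D x v z E, c = D ++ x :: v :: z :: E ∧ ¬ TopAscent lab (r ++ (D ++ [x]).tail) x v z
  | r, u :: v :: w :: c, h => by
    rw [TopAscending, not_and_or] at h
    rcases h with h | h
    · exact ⟨[], u, v, w, c, rfl, by simpa using h⟩
    · obtain ⟨D, x, v', z, E, hc, hD⟩ := exists_eq_append_of_not_topAscending h
      refine ⟨u :: D, x, v', z, E, by rw [hc, List.cons_append], ?_⟩
      have hroot : r ++ [v] ++ (D ++ [x]).tail = r ++ (u :: D ++ [x]).tail := by
        cases D with
        | nil => simp_all
        | cons d D => simp_all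
      rwa [← hroot]
  | _, [], h | _, [_], h | _, [_, _], h => absurd trivial h

end TopAscending

namespace IsTopolCLLabeling

variable {α Q : Type*} [PartialOrder α] [LinearOrder Q] {lab : List α → α → α → Q}

section OrderBot

variable [OrderBot α]

theorem exists_forkLt_of_not_topAscent (h : IsTopolCLLabeling lab) {ρ : List α} {x v z : α}
    (hρ : SatChain ⊥ x ρ) (hxv : x ⋖ v) (hvz : v ⋖ z) (hdesc : ¬ TopAscent lab ρ x v z) :
    ∃ c, SatChain x z c ∧ v ∉ c ∧ List.ForkLt (labelSeq lab ρ c) (labelSeq lab ρ [x, v, z]) := by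
  obtain ⟨c, hc, hmin, -⟩ := h x z ρ hρ (hxv.le.trans hvz.le)
  have hne : [x, v, z] ≠ c := by
    rintro rfl
    exact hdesc ⟨hxv, hvz, hmin⟩
  refine ⟨c, hc, fun hv ↦ hne (hc.eq_triple hxv hvz hv).symm, ?_⟩
  have hlt : labelSeq lab ρ c < labelSeq lab ρ [x, v, z] := hmin _ (.triple hxv hvz) hne
  refine (List.forkLt_or_prefix_of_lt hlt).resolve_right fun hp ↦ ?_
  have hlen := hp.length_le
  have h3 := hc.three_le_length hxv.lt hvz.lt
  simp only [length_labelSeq, List.length_cons, List.length_nil] at hlen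
  refine lt_irrefl _ ((hp.eq_of_length ?_) ▸ hlt)
  simp only [length_labelSeq, List.length_cons, List.length_nil]
  omega

theorem exists_forkLt_of_not_topAscending (h : IsTopolCLLabeling lab) {r c : List α} {u w : α}
    (hr : SatChain ⊥ u r) (hc : SatChain u w c) (hdesc : ¬ TopAscending lab r c) :
    ∃ c' v, SatChain u w c' ∧ List.ForkLt (labelSeq lab r c') (labelSeq lab r c) ∧
      u < v ∧ v < w ∧ c'.MissesOnly c v := by
  obtain ⟨D, x, v, z, E, rfl, hxvz⟩ := exists_eq_append_of_not_topAscending hdesc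
  have hxv : x ⋖ v := (List.isChain_append.1 hc.1).2.1.rel
  have hvz : v ⋖ z := (List.isChain_append.1 hc.1).2.1.tail.rel
  obtain ⟨c₁, hc₁, hv, hfork⟩ := h.exists_forkLt_of_not_topAscent (hr.append_tail hc.initial)
    hxv hvz hxvz
  have hsplit : D ++ x :: v :: z :: E = D ++ [x, v, z] ++ E := by simp
  rw [hsplit] at hc ⊢
  have hmiss : c₁.MissesOnly [x, v, z] v := by
    refine ⟨by simp, hv, fun y hy hyv ↦ ?_⟩
    simp only [List.mem_cons, List.not_mem_nil, or_false] at hy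
    rcases hy with rfl | rfl | rfl
    exacts [hc₁.head_mem, absurd rfl hyv, hc₁.last_mem]
  refine ⟨D ++ c₁ ++ E, v, hc.splice (.triple hxv hvz) hc₁,
    labelSeq_forkLt_splice lab rfl hc₁.2.1 E E hfork, ?_, ?_, hmiss.splice D E hc.nodup⟩
  · exact (hc.head_le_of_mem (by simp)).trans_lt hxv.lt
  · exact hvz.lt.trans_le (hc.le_last_of_mem (by simp))

theorem exists_forall_forkLt [Fintype α] (h : IsTopolCLLabeling lab) {r : List α} {u w : α}
    (hr : SatChain ⊥ u r) (huw : u ≤ w) :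
    ∃ c₀, SatChain u w c₀ ∧
      (∀ c, SatChain u w c → c ≠ c₀ → List.ForkLt (labelSeq lab r c₀) (labelSeq lab r c)) ∧
      ∀ c, SatChain u w c → c ≠ c₀ → ¬ TopAscending lab r c := by
  obtain ⟨c₀, hc₀, hmin, hdesc⟩ := h u w r hr huw
  refine ⟨c₀, hc₀, ?_, hdesc⟩
  by_contra! hbad
  set B := {c | SatChain u w c ∧ c ≠ c₀ ∧ labelSeq lab r c₀ <+: labelSeq lab r c}
  have hB : B.Finite := (List.finite_length_le α (Fintype.card α)).subset
    fun c hc ↦ hc.1.nodup.length_le_card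
  have hBne : B.Nonempty := by
    obtain ⟨c, hc, hne, hf⟩ := hbad
    exact ⟨c, hc, hne, (List.forkLt_or_prefix_of_lt (hmin c hc hne)).resolve_left hf⟩
  -- a lexicographically minimal counterexample `c` has a descent, whose removal either yields
  -- a smaller counterexample or a chain lexicographically before `c₀`
  obtain ⟨c, ⟨hc, hne, hpre⟩, hcmin⟩ := B.exists_min_image (labelSeq lab r) hB hBne
  obtain ⟨c', -, hc', hfork, -⟩ := h.exists_forkLt_of_not_topAscending hr hc (hdesc c hc hne)
  have hc'ne : c' ≠ c₀ := by
    rintro rfl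
    exact hfork.not_prefix hpre
  rcases hfork.prefix_or_forkLt hpre with hpre' | hfork'
  · exact (hcmin c' ⟨hc', hc'ne, hpre'⟩).not_gt hfork.lt
  · exact (show labelSeq lab r c₀ < labelSeq lab r c' from hmin c' hc' hc'ne).not_gt hfork'.lt

end OrderBot

theorem exists_missesOnly_of_not_lt [BoundedOrder α] [Fintype α] (h : IsTopolCLLabeling lab)
    {m m' : List α} (hm : SatChain ⊥ ⊤ m) (hm' : SatChain ⊥ ⊤ m') (hne : m ≠ m')
    (hlt : ¬ labelSeq lab [⊥] m' < labelSeq lab [⊥] m) :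
    ∃ m'' v, SatChain ⊥ ⊤ m'' ∧ labelSeq lab [⊥] m'' < labelSeq lab [⊥] m' ∧ v ∉ m ∧
      m''.MissesOnly m' v := by
  obtain ⟨P, u, C, Z, w, S, S', rfl, rfl, hCZ, hZ⟩ := hm.exists_detour hm' hne
  have hρ : SatChain ⊥ u ([⊥] ++ (P ++ [u]).tail) :=
    (SatChain.singleton ⊥).append_tail
      (show SatChain ⊥ ⊤ (P ++ u :: (C ++ w :: S)) by simpa using hm).initial
  have hc := hm.segment
  have hc' := hm'.segment
  obtain ⟨c₀, -, hfork, hdesc⟩ := h.exists_forall_forkLt hρ hc.le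
  by_cases hc₀ : u :: Z ++ [w] = c₀
  · subst hc₀
    exact absurd (labelSeq_forkLt_splice lab rfl rfl S S' (hfork _ hc (by simpa using hCZ))).lt hlt
  obtain ⟨c', v, hc'', hfork', huv, hvw, hmiss⟩ :=
    h.exists_forkLt_of_not_topAscending hρ hc' (hdesc _ hc' hc₀)
  refine ⟨P ++ c' ++ S', v, hm'.splice hc' hc'',
    (labelSeq_forkLt_splice lab rfl hc''.2.1 S' S' hfork').lt, ?_, hmiss.splice P S' hm'.nodup⟩
  exact hZ v (by simpa [huv.ne', hvw.ne] using hmiss.1)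

end IsTopolCLLabeling

/-- Given a topological CL-labeling of a finite bounded poset, any enumeration of the
maximal chains (the facets of the order complex) that linearly extends the
lexicographic order on their label sequences is a shelling order: for all `i < j`
there is `l < j` with `F_i ∩ F_j ⊆ F_l ∩ F_j` and `|F_l ∩ F_j| = |F_j| - 1`. -/
theorem stmt_17 {α : Type*} [PartialOrder α] [BoundedOrder α] [Fintype α]
    [DecidableEq α] {Q : Type*} [LinearOrder Q] (lab : List α → α → α → Q)
    (h : IsTopolCLLabeling lab)
    (ms : List (List α))
    (hmem : ∀ c, SatChain (⊥ : α) ⊤ c ↔ c ∈ ms)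
    (hnodup : ms.Nodup)
    (hlex : ∀ (i j : Fin ms.length),
      List.Lex (· < ·) (labelSeq lab [⊥] (ms.get i)) (labelSeq lab [⊥] (ms.get j)) →
      (i : ℕ) < (j : ℕ)) :
    ∀ (i j : Fin ms.length), (i : ℕ) < (j : ℕ) →
      ∃ l : Fin ms.length, (l : ℕ) < (j : ℕ) ∧
        (ms.get i).toFinset ∩ (ms.get j).toFinset ⊆
          (ms.get l).toFinset ∩ (ms.get j).toFinset ∧
        ((ms.get l).toFinset ∩ (ms.get j).toFinset).card =
          (ms.get j).toFinset.card - 1 := by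
  intro i j hij
  have hchain (k : Fin ms.length) : SatChain (⊥ : α) ⊤ (ms.get k) := (hmem _).2 (ms.get_mem k)
  have hne : ms.get i ≠ ms.get j := fun he ↦ hij.ne (congrArg Fin.val (hnodup.get_inj_iff.1 he))
  obtain ⟨m, v, hm, hlt, hvi, hmiss⟩ := h.exists_missesOnly_of_not_lt (hchain i) (hchain j) hne
    fun hji ↦ (hlex j i hji).not_gt hij
  obtain ⟨l, rfl⟩ := List.get_of_mem ((hmem m).1 hm)
  refine ⟨l, hlex l j hlt, ?_, ?_⟩ <;> rw [hmiss.toFinset_inter]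
  · intro y hy
    rw [Finset.mem_inter, List.mem_toFinset] at hy
    exact Finset.mem_erase.2 ⟨fun hyv ↦ hvi (hyv ▸ hy.1), hy.2⟩
  · exact Finset.card_erase_of_mem (List.mem_toFinset.2 hmiss.1)
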